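/- There is a universal constant C > 0 such that for every d ≥ 1: ∑_{i=1}^d ‖∂b/∂x_i‖_{L²(ℝ^d)}² ≤ C·d², where ∂b/∂x_i denotes the function equal to −2√C_d·x_i on the open unit ball {‖x‖₂ < 1} and 0 outside it (the weak partial derivative of b). -/

import Mathlib

/-!
On the unit ball `∑ᵢ (∂ᵢb)² = 4 C_d ‖x‖²` and `b² = C_d (1 - ‖x‖²)²`, so both integrals are radial,
and `∫_B f(‖x‖) dx = d |B| ∫₀¹ r^(d-1) f(r) dr`. This gives `∑ᵢ ‖∂ᵢb‖² = 4 C_d d |B| / (d + 2)`,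
while the normalisation `‖b‖₂ = 1` forces `C_d d |B| = d (d + 2) (d + 4) / 8`. Hence the sum is
`d (d + 4) / 2 ≤ 3 d²`.
-/

open MeasureTheory

/-- The Euclidean (ℓ₂) norm on `ℝ^d`. -/
noncomputable def e2norm {d : ℕ} (x : Fin d → ℝ) : ℝ := Real.sqrt (∑ i, x i ^ 2)

/-- The bump function `b(x) = √C_d (1 - ‖x‖₂²)` on the unit ball, `0` outside. -/
noncomputable def bump (d : ℕ) (Cd : ℝ) (x : Fin d → ℝ) : ℝ :=
  if e2norm x < 1 then Real.sqrt Cd * (1 - e2norm x ^ 2) else 0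

/-- The weak partial derivative of `b` in direction `i`: equal to `-2√C_d·x_i` on
the open unit ball and `0` outside it. -/
noncomputable def bumpDeriv (d : ℕ) (Cd : ℝ) (i : Fin d) (x : Fin d → ℝ) : ℝ :=
  if e2norm x < 1 then -2 * Real.sqrt Cd * x i else 0

open Set

lemma e2norm_eq_norm_toLp {d : ℕ} (x : Fin d → ℝ) : e2norm x = ‖WithLp.toLp 2 x‖ := by
  simp [e2norm, EuclideanSpace.norm_eq, Real.norm_eq_abs, sq_abs]

lemma e2norm_sq {d : ℕ} (x : Fin d → ℝ) : e2norm x ^ 2 = ∑ i, x i ^ 2 :=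
  Real.sq_sqrt (by positivity)

lemma abs_le_e2norm {d : ℕ} (x : Fin d → ℝ) (i : Fin d) : |x i| ≤ e2norm x :=
  Real.abs_le_sqrt (Finset.single_le_sum (fun j _ => sq_nonneg (x j)) (Finset.mem_univ i))

-- Dimension `n + 1` rather than `d`, to keep `d - 1` out of the radial weight `r ^ n`.
lemma integral_comp_e2norm (n : ℕ) (H : ℝ → ℝ) :
    ∫ x : Fin (n + 1) → ℝ, H (e2norm x) =
      (n + 1) * volume.real (Metric.ball (0 : EuclideanSpace ℝ (Fin (n + 1))) 1) *
        ∫ r in Ioi 0, r ^ n * H r := by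
  simp_rw [e2norm_eq_norm_toLp]
  rw [(PiLp.volume_preserving_toLp (Fin (n + 1))).integral_comp
    (MeasurableEquiv.toLp 2 _).measurableEmbedding (fun y => H ‖y‖), integral_fun_norm_addHaar]
  simp [mul_assoc]

lemma integral_ite_e2norm_lt_one (n : ℕ) (f : ℝ → ℝ) :
    ∫ x : Fin (n + 1) → ℝ, (if e2norm x < 1 then f (e2norm x) else 0) =
      (n + 1) * volume.real (Metric.ball (0 : EuclideanSpace ℝ (Fin (n + 1))) 1) *
        ∫ r in 0..1, r ^ n * f r := by
  rw [integral_comp_e2norm n (fun r => if r < 1 then f r else 0),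
    intervalIntegral.integral_of_le zero_le_one, ← setIntegral_congr_set Ioo_ae_eq_Ioc,
    ← Ioi_inter_Iio, ← setIntegral_indicator measurableSet_Iio]
  congr 2 with r
  simp [indicator_apply, mul_ite]

lemma integral_pow_mul_one_sub_sq_sq (n : ℕ) :
    ∫ r in (0 : ℝ)..1, r ^ n * (1 - r ^ 2) ^ 2 = 8 / (((n : ℝ) + 1) * (n + 3) * (n + 5)) := by
  have expand (r : ℝ) : r ^ n * (1 - r ^ 2) ^ 2 = r ^ n - 2 * r ^ (n + 2) + r ^ (n + 4) := by ring
  simp_rw [expand]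
  rw [intervalIntegral.integral_add, intervalIntegral.integral_sub,
    intervalIntegral.integral_const_mul]
  · simp only [integral_pow]
    push_cast
    field_simp
    ring
  all_goals exact Continuous.intervalIntegrable (by fun_prop) _ _

lemma integral_pow_mul_sq (n : ℕ) : ∫ r in (0 : ℝ)..1, r ^ n * r ^ 2 = 1 / ((n : ℝ) + 3) := by
  simp_rw [← pow_add, integral_pow]
  push_cast
  ring

lemma bump_sq (d : ℕ) (Cd : ℝ) (x : Fin d → ℝ) :
    bump d Cd x ^ 2 = if e2norm x < 1 then Real.sqrt Cd ^ 2 * (1 - e2norm x ^ 2) ^ 2 else 0 := by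
  unfold bump
  split_ifs <;> ring

lemma sum_bumpDeriv_sq (d : ℕ) (Cd : ℝ) (x : Fin d → ℝ) :
    ∑ i, bumpDeriv d Cd i x ^ 2 =
      if e2norm x < 1 then 4 * Real.sqrt Cd ^ 2 * e2norm x ^ 2 else 0 := by
  unfold bumpDeriv
  split_ifs
  · rw [e2norm_sq, Finset.mul_sum]
    exact Finset.sum_congr rfl fun i _ => by ring
  · simp

lemma integrable_bumpDeriv_sq (d : ℕ) (Cd : ℝ) (i : Fin d) :
    Integrable fun x => bumpDeriv d Cd i x ^ 2 := by
  have hS : MeasurableSet {x : Fin d → ℝ | e2norm x < 1} :=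
    measurableSet_lt (by unfold e2norm; fun_prop) measurable_const
  have hsub : {x : Fin d → ℝ | e2norm x < 1} ⊆ Metric.closedBall 0 1 := fun x hx =>
    mem_closedBall_zero_iff.2 <| (pi_norm_le_iff_of_nonneg zero_le_one).2 fun i =>
      (abs_le_e2norm x i).trans hx.le
  have : (fun x => bumpDeriv d Cd i x ^ 2) =
      {x | e2norm x < 1}.indicator fun x => (-2 * Real.sqrt Cd * x i) ^ 2 := by
    ext x
    simp only [bumpDeriv, indicator_apply, mem_ofPred_eq]
    split_ifs <;> simp
  rw [this, integrable_indicator_iff hS]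
  exact (ContinuousOn.integrableOn_compact (isCompact_closedBall 0 1) (by fun_prop)).mono_set hsub

lemma integral_bump_sq (n : ℕ) (Cd : ℝ) :
    ∫ x, bump (n + 1) Cd x ^ 2 =
      (n + 1) * volume.real (Metric.ball (0 : EuclideanSpace ℝ (Fin (n + 1))) 1) *
        Real.sqrt Cd ^ 2 * (8 / ((n + 1) * (n + 3) * (n + 5))) := by
  simp_rw [bump_sq]
  rw [integral_ite_e2norm_lt_one n fun r => Real.sqrt Cd ^ 2 * (1 - r ^ 2) ^ 2]
  simp_rw [mul_left_comm _ (Real.sqrt Cd ^ 2)]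
  rw [intervalIntegral.integral_const_mul, integral_pow_mul_one_sub_sq_sq]
  ring

lemma sum_integral_bumpDeriv_sq (n : ℕ) (Cd : ℝ) :
    ∑ i, ∫ x, bumpDeriv (n + 1) Cd i x ^ 2 =
      (n + 1) * volume.real (Metric.ball (0 : EuclideanSpace ℝ (Fin (n + 1))) 1) *
        Real.sqrt Cd ^ 2 * (4 / (n + 3)) := by
  rw [← integral_finsetSum _ fun i _ => integrable_bumpDeriv_sq _ _ i]
  simp_rw [sum_bumpDeriv_sq]
  rw [integral_ite_e2norm_lt_one n fun r => 4 * Real.sqrt Cd ^ 2 * r ^ 2]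
  simp_rw [mul_left_comm _ (4 * Real.sqrt Cd ^ 2)]
  rw [intervalIntegral.integral_const_mul, integral_pow_mul_sq]
  ring

/-- The sum of the squared `L²` norms of the partial derivatives of `b` is `O(d²)`
(Claim `smallmoment`). -/
theorem sum_sq_L2_norms_bump_derivs_le :
    ∃ C : ℝ, 0 < C ∧
      ∀ (d : ℕ), 1 ≤ d → ∀ Cd : ℝ, 0 < Cd →
        (∫ x : Fin d → ℝ, bump d Cd x ^ 2) = 1 →
        (∑ i : Fin d, ∫ x : Fin d → ℝ, bumpDeriv d Cd i x ^ 2) ≤ C * (d : ℝ) ^ 2 := by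
  refine ⟨3, by norm_num, fun d hd Cd _ hb => ?_⟩
  obtain ⟨n, rfl⟩ := Nat.exists_eq_add_of_le' hd
  rw [integral_bump_sq] at hb
  rw [sum_integral_bumpDeriv_sq]
  set K := (n + 1) * volume.real (Metric.ball (0 : EuclideanSpace ℝ (Fin (n + 1))) 1) *
    Real.sqrt Cd ^ 2
  have hK : K = (n + 1) * (n + 3) * (n + 5) / 8 := by
    field_simp at hb
    linarith
  rw [hK]
  push_cast
  field_simp
  nlinarith
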